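/- arXiv:1407.3993 — 3 statements merged into one kernel-verified Lean document; each statement's English description precedes it below -/
import Mathlib

section
/- Let μ₊ and μ₋ be Conley–Zehnder iteration sequences with μ₊(1) − μ₋(1) ≥ 2. Then for every integer k ≥ 1 one has μ₊(k) − μ₋(k) ≥ 2. (Numeric content of the first case of the paper's proposition on covers of cylinders: any k-fold unbranched cover of a finite energy cylinder of Fredholm index at least 2, asymptotic to γ₊^k and γ₋^k, again has Fredholm index μ_CZ(γ₊^k) − μ_CZ(γ₋^k) ≥ 2.) -/
/-!
Every Conley–Zehnder iteration sequence grows almost linearly: `|μ k - k μ 1| ≤ k - 1`.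
For hyperbolic type `μ k = k μ 1` exactly; for elliptic type this is the estimate
`k ⌊θ⌋ ≤ ⌊k θ⌋ < k ⌊θ⌋ + k`. Hence `μ₊ k - μ₋ k ≥ k (μ₊ 1 - μ₋ 1) - 2 (k - 1) ≥ 2`.
-/

/-- A Conley–Zehnder iteration sequence of elliptic type: there is a
non-integer real rotation angle `θ` with `μ k = 2⌊kθ⌋ + 1` for all `k ≥ 1`. -/
def IsEllipticCZSeq (μ : ℕ → ℤ) : Prop :=
  ∃ θ : ℝ, (∀ n : ℤ, θ ≠ (n : ℝ)) ∧ ∀ k : ℕ, 1 ≤ k → μ k = 2 * ⌊(k : ℝ) * θ⌋ + 1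

/-- A Conley–Zehnder iteration sequence of hyperbolic type: there is an
integer `r` with `μ k = k·r` for all `k ≥ 1`. -/
def IsHyperbolicCZSeq (μ : ℕ → ℤ) : Prop :=
  ∃ r : ℤ, ∀ k : ℕ, 1 ≤ k → μ k = (k : ℤ) * r

/-- A Conley–Zehnder iteration sequence: either elliptic or hyperbolic type. -/
def IsCZSeq (μ : ℕ → ℤ) : Prop :=
  IsEllipticCZSeq μ ∨ IsHyperbolicCZSeq μ

section FloorNatCastMul

variable {R : Type*} [Ring R] [LinearOrder R] [IsStrictOrderedRing R] [FloorRing R]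

theorem natCast_mul_floor_le_floor_natCast_mul (k : ℕ) (a : R) :
    (k : ℤ) * ⌊a⌋ ≤ ⌊(k : R) * a⌋ := by
  rcases Nat.eq_zero_or_pos k with rfl | hk
  · simp
  · simpa [mul_comm, Int.natCast_mul_floor_div_cancel hk.ne'] using
      Int.ediv_mul_le ⌊(k : R) * a⌋ (Int.natCast_ne_zero.2 hk.ne')

theorem floor_natCast_mul_lt {k : ℕ} (hk : 0 < k) (a : R) :
    ⌊(k : R) * a⌋ < (k : ℤ) * ⌊a⌋ + k := by
  simpa [mul_add, Int.natCast_mul_floor_div_cancel hk.ne', mul_comm] using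
    Int.lt_ediv_add_one_mul_self ⌊(k : R) * a⌋ (Int.natCast_pos.2 hk)

end FloorNatCastMul

theorem IsEllipticCZSeq.abs_sub_mul_le {μ : ℕ → ℤ} (hμ : IsEllipticCZSeq μ) {k : ℕ}
    (hk : 1 ≤ k) : |μ k - k * μ 1| ≤ k - 1 := by
  obtain ⟨θ, -, hθ⟩ := hμ
  have lower := natCast_mul_floor_le_floor_natCast_mul k θ
  have upper := floor_natCast_mul_lt hk θ
  rw [hθ k hk, hθ 1 le_rfl, Nat.cast_one, one_mul, abs_le]
  constructor <;> linarith

theorem IsCZSeq.abs_sub_mul_le {μ : ℕ → ℤ} (hμ : IsCZSeq μ) {k : ℕ} (hk : 1 ≤ k) :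
    |μ k - k * μ 1| ≤ k - 1 := by
  rcases hμ with hell | ⟨r, hr⟩
  · exact hell.abs_sub_mul_le hk
  · rw [hr k hk, hr 1 le_rfl, Nat.cast_one, one_mul, sub_self, abs_zero]
    exact sub_nonneg.2 (by exact_mod_cast hk)

/-- If two Conley–Zehnder iteration sequences satisfy μ₊(1) − μ₋(1) ≥ 2,
then μ₊(k) − μ₋(k) ≥ 2 for every k ≥ 1. -/
theorem cz_index_ge_two_iterates (μpos μneg : ℕ → ℤ)
    (hpos : IsCZSeq μpos) (hneg : IsCZSeq μneg)
    (h : μpos 1 - μneg 1 ≥ 2) (k : ℕ) (hk : 1 ≤ k) :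
    μpos k - μneg k ≥ 2 := by
  have bound_pos := abs_le.1 (hpos.abs_sub_mul_le hk)
  have bound_neg := abs_le.1 (hneg.abs_sub_mul_le hk)
  have gap : (k : ℤ) * 2 ≤ k * (μpos 1 - μneg 1) := mul_le_mul_of_nonneg_left h (by positivity)
  linarith [bound_pos.1, bound_neg.2]
end

section
/- Let μ₊ and μ₋ be Conley–Zehnder iteration sequences with μ₊(1) − μ₋(1) = 1 and with μ₊ of hyperbolic type, and let k₁, …, k_n be positive integers with k = k₁ + ⋯ + k_n. Then (n − 1) + μ₊(k) − (μ₋(k₁) + ⋯ + μ₋(k_n)) ≥ 2n − 1. (This is case (ii) of the paper's proposition: a genus-zero branched k-fold cover with one positive puncture of an index-1 cylinder whose positive asymptotic orbit γ₊ is hyperbolic has Fredholm index at least 2n − 1.) -/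
/-! Every Conley–Zehnder iteration sequence grows at most linearly with slope `μ 1 + 1`:
`μ k ≤ k (μ 1 + 1) - 1`. In the elliptic case this is `⌊kθ⌋ < k(⌊θ⌋ + 1)`; in the hyperbolic
case `μ k = k μ 1`. Summing over the negative ends, `∑ μ₋(kᵢ) ≤ k μ₊(1) - n`, and the index
bound follows since `μ₊(k) = k μ₊(1)`. -/

theorem IsEllipticCZSeq.apply_le {μ : ℕ → ℤ} (hμ : IsEllipticCZSeq μ) {k : ℕ} (hk : 1 ≤ k) :
    μ k ≤ k * (μ 1 + 1) - 1 := by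
  obtain ⟨θ, -, hθ⟩ := hμ
  have hfloor : ⌊(k : ℝ) * θ⌋ < k * (⌊θ⌋ + 1) := by
    rw [Int.floor_lt]
    push_cast
    exact mul_lt_mul_of_pos_left (Int.lt_floor_add_one θ) (by exact_mod_cast hk)
  rw [hθ k hk, hθ 1 le_rfl, Nat.cast_one, one_mul]
  linarith

theorem IsHyperbolicCZSeq.apply_eq_mul {μ : ℕ → ℤ} (hμ : IsHyperbolicCZSeq μ) {k : ℕ}
    (hk : 1 ≤ k) : μ k = k * μ 1 := by
  obtain ⟨r, hr⟩ := hμ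
  rw [hr k hk, hr 1 le_rfl, Nat.cast_one, one_mul]

theorem IsHyperbolicCZSeq.apply_le {μ : ℕ → ℤ} (hμ : IsHyperbolicCZSeq μ) {k : ℕ} (hk : 1 ≤ k) :
    μ k ≤ k * (μ 1 + 1) - 1 := by
  have : (1 : ℤ) ≤ k := by exact_mod_cast hk
  rw [hμ.apply_eq_mul hk]
  linarith

theorem IsCZSeq.apply_le {μ : ℕ → ℤ} (hμ : IsCZSeq μ) {k : ℕ} (hk : 1 ≤ k) :
    μ k ≤ k * (μ 1 + 1) - 1 :=
  hμ.elim (·.apply_le hk) (·.apply_le hk)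

theorem IsCZSeq.sum_apply_le {μ : ℕ → ℤ} (hμ : IsCZSeq μ) {ι : Type*} (s : Finset ι)
    {K : ι → ℕ} (hK : ∀ i ∈ s, 1 ≤ K i) :
    ∑ i ∈ s, μ (K i) ≤ (∑ i ∈ s, K i : ℕ) * (μ 1 + 1) - s.card :=
  calc ∑ i ∈ s, μ (K i) ≤ ∑ i ∈ s, ((K i : ℤ) * (μ 1 + 1) - 1) :=
        Finset.sum_le_sum fun i hi => hμ.apply_le (hK i hi)
    _ = (∑ i ∈ s, K i : ℕ) * (μ 1 + 1) - s.card := by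
        simp [Finset.sum_sub_distrib, Finset.sum_mul]

theorem cz_cover_cylinder_index_pos_hyperbolic_general (μpos μneg : ℕ → ℤ)
    (hneg : IsCZSeq μneg)
    (h : μpos 1 - μneg 1 = 1) (hhyp : IsHyperbolicCZSeq μpos)
    (n : ℕ) (hn : 1 ≤ n) (K : Fin n → ℕ) (hK : ∀ i, 1 ≤ K i)
    (k : ℕ) (hk : k = ∑ i, K i) :
    ((n : ℤ) - 1) + μpos k - ∑ i, μneg (K i) ≥ 2 * n - 1 := by
  have hnk : n ≤ k := by
    simpa [hk] using Finset.card_nsmul_le_sum Finset.univ K 1 fun i _ => hK i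
  have hpos_k : μpos k = k * μpos 1 := hhyp.apply_eq_mul (hn.trans hnk)
  have hneg_sum := hneg.sum_apply_le Finset.univ fun i _ => hK i
  rw [← hk, Finset.card_univ, Fintype.card_fin] at hneg_sum
  rw [hpos_k, show μpos 1 = μneg 1 + 1 by linarith]
  linarith

/-- Case (ii) of the proposition on covers of nontrivial cylinders: if
μ₊(1) − μ₋(1) = 1 with μ₊ of hyperbolic type and k = k₁ + ⋯ + kₙ with
each kᵢ ≥ 1, then (n − 1) + μ₊(k) − ∑ᵢ μ₋(kᵢ) ≥ 2n − 1. -/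
theorem cz_cover_cylinder_index_pos_hyperbolic (μpos μneg : ℕ → ℤ)
    (hpos : IsCZSeq μpos) (hneg : IsCZSeq μneg)
    (h : μpos 1 - μneg 1 = 1) (hhyp : IsHyperbolicCZSeq μpos)
    (n : ℕ) (hn : 1 ≤ n) (K : Fin n → ℕ) (hK : ∀ i, 1 ≤ K i)
    (k : ℕ) (hk : k = ∑ i, K i) :
    ((n : ℤ) - 1) + μpos k - ∑ i, μneg (K i) ≥ 2 * n - 1 :=
  cz_cover_cylinder_index_pos_hyperbolic_general μpos μneg hneg h hhyp n hn K hK k hk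
end

section
/- Let μ be a Conley–Zehnder iteration sequence and let k₁, …, k_n be positive integers with k = k₁ + ⋯ + k_n. Then (n − 1) + μ(k) − (μ(k₁) + ⋯ + μ(k_n)) ≥ 0; moreover, if μ is of hyperbolic type then (n − 1) + μ(k) − (μ(k₁) + ⋯ + μ(k_n)) = n − 1. (This is the paper's proposition on covers of trivial cylinders: a genus-zero k-fold cover with one positive puncture of the trivial cylinder over a nondegenerate Reeb orbit γ, lying in M^J(γ^k; γ^{k₁},…,γ^{k_n}), has Fredholm index at least 0, equal to n − 1 when γ is hyperbolic.) -/
/-! Hyperbolic iteration sequences are additive, so the index is exactly `n - 1`. In the elliptic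
case `μ(kᵢ) = 2⌊kᵢθ⌋ + 1`, and superadditivity of the floor, `∑ ⌊kᵢθ⌋ ≤ ⌊kθ⌋`, gives
`∑ μ(kᵢ) ≤ μ(k) + (n - 1)`. -/

theorem Int.sum_floor_le_floor_sum {ι R : Type*} [Ring R] [LinearOrder R] [IsStrictOrderedRing R]
    [FloorRing R] (s : Finset ι) (f : ι → R) : ∑ i ∈ s, ⌊f i⌋ ≤ ⌊∑ i ∈ s, f i⌋ :=
  Int.le_floor.2 <| by
    push_cast
    exact Finset.sum_le_sum fun i _ => Int.floor_le (f i)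

section IterationSequences

variable {ι : Type*} {μ : ℕ → ℤ} {s : Finset ι} {K : ι → ℕ}

theorem one_le_sum_of_nonempty (hs : s.Nonempty) (hK : ∀ i ∈ s, 1 ≤ K i) : 1 ≤ ∑ i ∈ s, K i :=
  let ⟨j, hj⟩ := hs
  (hK j hj).trans (Finset.single_le_sum (fun _ _ => Nat.zero_le _) hj)

theorem IsHyperbolicCZSeq.map_sum (hμ : IsHyperbolicCZSeq μ) (hs : s.Nonempty)
    (hK : ∀ i ∈ s, 1 ≤ K i) : μ (∑ i ∈ s, K i) = ∑ i ∈ s, μ (K i) := by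
  obtain ⟨r, hr⟩ := hμ
  rw [hr _ (one_le_sum_of_nonempty hs hK), Finset.sum_congr rfl fun i hi => hr _ (hK i hi)]
  push_cast
  exact Finset.sum_mul s _ r

theorem IsEllipticCZSeq.sum_le (hμ : IsEllipticCZSeq μ) (hs : s.Nonempty)
    (hK : ∀ i ∈ s, 1 ≤ K i) : ∑ i ∈ s, μ (K i) ≤ μ (∑ i ∈ s, K i) + (s.card - 1) := by
  obtain ⟨θ, -, hθ⟩ := hμ
  have hfloor : ∑ i ∈ s, ⌊(K i : ℝ) * θ⌋ ≤ ⌊((∑ i ∈ s, K i : ℕ) : ℝ) * θ⌋ := by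
    push_cast
    rw [Finset.sum_mul]
    exact Int.sum_floor_le_floor_sum s _
  rw [hθ _ (one_le_sum_of_nonempty hs hK), Finset.sum_congr rfl fun i hi => hθ _ (hK i hi),
    Finset.sum_add_distrib, ← Finset.mul_sum, Finset.sum_const, nsmul_one]
  linarith

theorem IsCZSeq.sum_le (hμ : IsCZSeq μ) (hs : s.Nonempty) (hK : ∀ i ∈ s, 1 ≤ K i) :
    ∑ i ∈ s, μ (K i) ≤ μ (∑ i ∈ s, K i) + (s.card - 1) := by
  rcases hμ with hell | hhyp
  · exact hell.sum_le hs hK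
  · have hcard : (1 : ℤ) ≤ s.card := by exact_mod_cast hs.card_pos
    rw [hhyp.map_sum hs hK]
    linarith

end IterationSequences

/-- Covers of trivial cylinders: if k = k₁ + ⋯ + kₙ with each kᵢ ≥ 1, then
(n − 1) + μ(k) − ∑ᵢ μ(kᵢ) ≥ 0, with equality to n − 1 when μ is of
hyperbolic type. -/
theorem cz_cover_trivial_cylinder_index (μ : ℕ → ℤ) (hμ : IsCZSeq μ)
    (n : ℕ) (hn : 1 ≤ n) (K : Fin n → ℕ) (hK : ∀ i, 1 ≤ K i)
    (k : ℕ) (hk : k = ∑ i, K i) :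
    ((n : ℤ) - 1) + μ k - ∑ i, μ (K i) ≥ 0 ∧
      (IsHyperbolicCZSeq μ →
        ((n : ℤ) - 1) + μ k - ∑ i, μ (K i) = (n : ℤ) - 1) := by
  subst hk
  have hne : (Finset.univ : Finset (Fin n)).Nonempty := Finset.univ_nonempty_iff.2 ⟨⟨0, hn⟩⟩
  have hK' : ∀ i ∈ Finset.univ, 1 ≤ K i := fun i _ => hK i
  refine ⟨?_, fun hhyp => ?_⟩
  · have hsum := hμ.sum_le hne hK'
    rw [Finset.card_univ, Fintype.card_fin] at hsum
    linarith
  · rw [hhyp.map_sum hne hK']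
    ring
end
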